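/- Let N = (0,1) ∪ (1,2) ∪ (2,3) ⊆ ℝ and let γ : N → ℝ² be given by γ(t) = (t, −1) for t ∈ (0,1), γ(t) = (t−1, 0) for t ∈ (1,2), and γ(t) = (t−2, 1) for t ∈ (2,3). Then for every p = (p₁, p₂) ∈ γ((1,2)) × γ((1,2)) (i.e., p₁ = (a, 0), p₂ = (b, 0) with a, b ∈ (0,1)), the map D_p ∘ γ : N → ℝ² is not a mapping with normal crossings. -/
import Mathlib


noncomputable section

abbrev E2 := EuclideanSpace ℝ (Fin 2)

/-- The point `(a, b) ∈ ℝ²`. -/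
def pt (a b : ℝ) : E2 := (EuclideanSpace.equiv (Fin 2) ℝ).symm ![a, b]

/-- The distance-squared mapping `D_p : ℝ² → ℝ²` associated to `p = (p₁, p₂)`. -/
def Dp (p₁ p₂ : E2) (x : E2) : E2 :=
  (EuclideanSpace.equiv (Fin 2) ℝ).symm ![‖x - p₁‖ ^ 2, ‖x - p₂‖ ^ 2]

/-- `f : ℝ → ℝ²` is an immersion with normal crossings: it is smooth, `f′(q) ≠ 0` everywhere,
every fiber has at most 2 elements, and at any two distinct points with the same image the
subspace `f′(q₁)ℝ + f′(q₂)ℝ` of `ℝ²` has dimension 2. -/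
def IsImmersionWithNormalCrossingsR (f : ℝ → E2) : Prop :=
  ContDiff ℝ (⊤ : ℕ∞) f ∧
  (∀ q : ℝ, deriv f q ≠ 0) ∧
  (∀ q₁ q₂ q₃ : ℝ, f q₁ = f q₂ → f q₂ = f q₃ → q₁ = q₂ ∨ q₁ = q₃ ∨ q₂ = q₃) ∧
  (∀ q₁ q₂ : ℝ, q₁ ≠ q₂ → f q₁ = f q₂ →
    Module.finrank ℝ ↥(Submodule.span ℝ {deriv f q₁, deriv f q₂}) = 2)

/-- The domain `N = (0,1) ∪ (1,2) ∪ (2,3)`. -/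
def Npw : Set ℝ := Set.Ioo 0 1 ∪ Set.Ioo 1 2 ∪ Set.Ioo 2 3

/-- The piecewise curve: `γ(t) = (t, −1)` on `(0,1)`, `(t−1, 0)` on `(1,2)`,
`(t−2, 1)` on `(2,3)` (extended arbitrarily elsewhere by the same formulas). -/
def γpw : ℝ → E2 := fun t =>
  if t < 1 then pt t (-1) else if t < 2 then pt (t - 1) 0 else pt (t - 2) 1

/-- `f` restricted to `S` is a mapping with normal crossings: fibers over `S` have at most
2 elements and the normal crossing condition holds at double points in `S`. -/
def MapWithNormalCrossingsOn (f : ℝ → E2) (S : Set ℝ) : Prop :=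
  (∀ q₁ ∈ S, ∀ q₂ ∈ S, ∀ q₃ ∈ S, f q₁ = f q₂ → f q₂ = f q₃ →
    q₁ = q₂ ∨ q₁ = q₃ ∨ q₂ = q₃) ∧
  (∀ q₁ ∈ S, ∀ q₂ ∈ S, q₁ ≠ q₂ → f q₁ = f q₂ →
    Module.finrank ℝ ↥(Submodule.span ℝ {deriv f q₁, deriv f q₂}) = 2)


lemma pt_sub (x y c d : ℝ) : pt x y - pt c d = pt (x - c) (y - d) := by
  simp only [pt, ← map_sub]
  congr 1
  ext i
  fin_cases i <;> simp

lemma norm_pt_sq (u w : ℝ) : ‖pt u w‖ ^ 2 = u ^ 2 + w ^ 2 := by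
  rw [pt, EuclideanSpace.norm_eq, Real.sq_sqrt (by positivity)]
  simp [Fin.sum_univ_two, sq_abs]

lemma Dp_pt (c d x y : ℝ) :
    Dp (pt c 0) (pt d 0) (pt x y) = pt ((x - c) ^ 2 + y ^ 2) ((x - d) ^ 2 + y ^ 2) := by
  simp only [Dp, pt_sub, sub_zero, norm_pt_sq]
  rfl

theorem stmt15 (a b : ℝ) (ha : a ∈ Set.Ioo (0:ℝ) 1) (hb : b ∈ Set.Ioo (0:ℝ) 1) :
    ¬ MapWithNormalCrossingsOn (fun t => Dp (pt a 0) (pt b 0) (γpw t)) Npw := by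
  intro ⟨_, h2⟩
  set f : ℝ → E2 := fun t => Dp (pt a 0) (pt b 0) (γpw t) with hf
  set H : ℝ → E2 := fun t => pt ((t - a) ^ 2 + 1) ((t - b) ^ 2 + 1) with hH
  have hmem1 : (1/2 : ℝ) ∈ Npw := Or.inl (Or.inl (by norm_num))
  have hmem2 : (5/2 : ℝ) ∈ Npw := Or.inr (by norm_num)
  -- f agrees with H near 1/2
  have hfe1 : f =ᶠ[nhds (1/2 : ℝ)] H := by
    filter_upwards [Ioo_mem_nhds (show (0:ℝ) < 1/2 by norm_num) (show (1/2:ℝ) < 1 by norm_num)]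
      with t ht
    have : γpw t = pt t (-1) := by rw [γpw, if_pos ht.2]
    simp only [hf, this, Dp_pt, hH, neg_one_sq]
  -- f agrees with H ∘ (· - 2) near 5/2
  have hfe2 : f =ᶠ[nhds (5/2 : ℝ)] (fun t => H (t - 2)) := by
    filter_upwards [Ioo_mem_nhds (show (2:ℝ) < 5/2 by norm_num) (show (5/2:ℝ) < 3 by norm_num)]
      with t ht
    have : γpw t = pt (t - 2) 1 := by
      rw [γpw]
      rw [if_neg (by linarith [ht.1]), if_neg (by linarith [ht.1])]
    simp only [hf, this, Dp_pt, hH, one_pow]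
  have hval : f (1/2) = f (5/2) := by
    rw [hfe1.self_of_nhds, hfe2.self_of_nhds]
    norm_num
  have hd1 : deriv f (1/2) = deriv H (1/2) := hfe1.deriv_eq
  have hd2 : deriv f (5/2) = deriv H (1/2) := by
    rw [hfe2.deriv_eq, deriv_comp_sub_const]
    norm_num
  have hne : (1/2 : ℝ) ≠ 5/2 := by norm_num
  have := h2 (1/2) hmem1 (5/2) hmem2 hne hval
  rw [hd1, hd2, Set.pair_eq_singleton] at this
  rcases eq_or_ne (deriv H (1/2)) 0 with h0 | h0
  · rw [h0, Submodule.span_zero_singleton, finrank_bot] at this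
    omega
  · rw [finrank_span_singleton h0] at this
    omega
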